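/- If x* ∈ X satisfies SP-RCPLD, then x* is AS-regular. -/

import Mathlib

open Filter Topology

noncomputable section

/-- Euclidean n-space. -/
abbrev E (n : ℕ) : Type := EuclideanSpace ℝ (Fin n)

/-- The full family of "tightened" gradient vectors at x:
all ∇h_i(x) together with the unit vectors e_i for i ∈ I₀(x*). -/
def tightFam {n q : ℕ} (h : Fin q → E n → ℝ) (xstar : E n) (x : E n) : Set (E n) :=
  {v | ∃ j, v = gradient (h j) x} ∪
    {v | ∃ i, xstar i = 0 ∧ v = (EuclideanSpace.single i (1 : ℝ) : E n)}

/-- The rank of the family `tightFam` at x. -/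
def tightRank {n q : ℕ} (h : Fin q → E n → ℝ) (xstar : E n) (x : E n) : ℕ :=
  Module.finrank ℝ ↥(Submodule.span ℝ (tightFam h xstar x))

/-- SP-RCPLD at x*. -/
def SPRCPLD {n m q : ℕ} (g : Fin m → E n → ℝ) (h : Fin q → E n → ℝ)
    (xstar : E n) : Prop :=
  ∃ U ∈ 𝓝 xstar,
    -- (i) constant rank of {∇h_i(x)} ∪ {e_i : i ∈ I₀(x*)} on U
    (∀ x ∈ U, tightRank h xstar x = tightRank h xstar xstar) ∧
    -- (ii) for all basis index sets I₁ ⊆ {1,…,q}, I₂ ⊆ I₀(x*) ...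
    ∀ (I₁ : Finset (Fin q)) (I₂ : Finset (Fin n)),
      (∀ i ∈ I₂, xstar i = 0) →
      LinearIndependent ℝ (fun j : (↥I₁ ⊕ ↥I₂) =>
        Sum.elim (fun i : ↥I₁ => gradient (h i.1) xstar)
          (fun i : ↥I₂ => (EuclideanSpace.single i.1 (1 : ℝ) : E n)) j) →
      Submodule.span ℝ
          ((fun i => gradient (h i) xstar) '' ↑I₁ ∪
            (fun i : Fin n => (EuclideanSpace.single i (1 : ℝ) : E n)) '' ↑I₂) =
        Submodule.span ℝ (tightFam h xstar xstar) →
      -- ... and every J ⊆ I_g(x*):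
      ∀ J : Finset (Fin m), (∀ i ∈ J, g i xstar = 0) →
        -- positive-linear dependence at x* ...
        (∃ (mu : Fin q → ℝ) (gam : Fin n → ℝ) (lam : Fin m → ℝ),
          (∀ i, 0 ≤ lam i) ∧
          (∀ i, i ∉ I₁ → mu i = 0) ∧ (∀ i, i ∉ I₂ → gam i = 0) ∧
          (∀ i, i ∉ J → lam i = 0) ∧
          ¬(mu = 0 ∧ gam = 0 ∧ lam = 0) ∧
          (∑ i, mu i • gradient (h i) xstar) +
            (∑ i, gam i • (EuclideanSpace.single i (1 : ℝ) : E n)) +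
            (∑ i, lam i • gradient (g i) xstar) = 0) →
        -- ... implies linear dependence on all of U:
        ∀ x ∈ U, ¬ LinearIndependent ℝ (fun j : (↥I₁ ⊕ ↥I₂ ⊕ ↥J) =>
          Sum.elim (fun i : ↥I₁ => gradient (h i.1) x)
            (Sum.elim (fun i : ↥I₂ => (EuclideanSpace.single i.1 (1 : ℝ) : E n))
              (fun i : ↥J => gradient (g i.1) x)) j)

/-- The cone K(x) (relative to the fixed point x*). -/
def Kcone {n m q : ℕ} (g : Fin m → E n → ℝ) (h : Fin q → E n → ℝ)
    (xstar : E n) (x : E n) : Set (E n) :=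
  {d | ∃ (mu : Fin q → ℝ) (lam : Fin m → ℝ),
    (∀ i, 0 ≤ lam i) ∧ (∀ i, g i xstar ≠ 0 → lam i = 0) ∧
    ∀ j, xstar j ≠ 0 →
      d j = (∑ i, mu i * gradient (h i) x j) + ∑ i, lam i * gradient (g i) x j}

/-- AS-regularity: outer semicontinuity of K(·) at x*. -/
def ASRegular {n m q : ℕ} (g : Fin m → E n → ℝ) (h : Fin q → E n → ℝ)
    (xstar : E n) : Prop :=
  ∀ (xk dk : ℕ → E n) (d : E n),
    Tendsto xk atTop (𝓝 xstar) → Tendsto dk atTop (𝓝 d) →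
    (∀ k, dk k ∈ Kcone g h xstar (xk k)) → d ∈ Kcone g h xstar xstar

/-!
Fix `I₁, I₂` such that `{∇hᵢ(x*)}_{I₁} ∪ {eᵢ}_{I₂}` is a basis of the span of
`{∇hᵢ(x*)} ∪ {eᵢ : i ∈ I₀(x*)}`. Linear independence is an open condition, so together with the
constant rank assumption the same index sets give a basis of the corresponding span at every `x`
near `x*`. Hence every `d ∈ K(x)` is a combination of this basis plus a nonnegative combination of
active gradients `∇gⱼ(x)`, and a conic Carathéodory argument lets the latter run over a set `J`
for which the whole family is linearly independent. Some `J` occurs infinitely often along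
`xᵏ → x*`. Normalising the coefficients, a limit of unbounded coefficients would be a nontrivial
positive-linear dependence at `x*`, which by SP-RCPLD would make the family dependent at `xᵏ`;
so the coefficients converge along a subsequence and their limit represents `d` in `K(x*)`.
-/

open Set

theorem Finset.sum_extend_val_smul {κ R M : Type*} [Fintype κ] [Semiring R] [AddCommMonoid M]
    [Module R M] (s : Finset κ) (f : s → R) (v : κ → M) :
    ∑ i, Subtype.val.extend f 0 i • v i = ∑ i : s, f i • v i := by
  rw [← Finset.sum_subset s.subset_univ fun i _ hi => by
    rw [Function.extend_val_apply' hi, Pi.zero_apply, zero_smul], ← Finset.sum_coe_sort]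
  exact Finset.sum_congr rfl fun i _ => by rw [Function.extend_val_apply i.2]

theorem Function.extend_val_nonneg {α R : Type*} [Zero R] [Preorder R] {p : α → Prop}
    {f : Subtype p → R} (hf : ∀ a, 0 ≤ f a) (x : α) : 0 ≤ Subtype.val.extend f 0 x := by
  by_cases hx : p x
  · rw [Function.extend_val_apply hx]
    exact hf _
  · rw [Function.extend_val_apply' hx]
    rfl

theorem ContDiff.continuous_gradient {𝕜 F : Type*} [RCLike 𝕜] [NormedAddCommGroup F]
    [InnerProductSpace 𝕜 F] [CompleteSpace F] {f : F → 𝕜} (hf : ContDiff 𝕜 1 f) :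
    Continuous (gradient f) :=
  (InnerProductSpace.toDual 𝕜 F).symm.continuous.comp (hf.continuous_fderiv one_ne_zero)

theorem LinearIndependent.span_range_eq_of_finrank_le {K M ι : Type*} [DivisionRing K]
    [AddCommGroup M] [Module K M] [FiniteDimensional K M] [Fintype ι] {b : ι → M} {T : Set M}
    (hb : LinearIndependent K b) (hbT : range b ⊆ T)
    (hT : Module.finrank K (Submodule.span K T) ≤ Fintype.card ι) :
    Submodule.span K (range b) = Submodule.span K T :=
  Submodule.eq_of_le_of_finrank_le (Submodule.span_mono hbT) (hT.trans (finrank_span_eq_card hb).ge)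

theorem EuclideanSpace.mem_span_single_of_apply_eq_zero {ι : Type*} [Fintype ι] [DecidableEq ι]
    {s : Set ι} {w : EuclideanSpace ℝ ι} (hw : ∀ j ∉ s, w j = 0) :
    w ∈ Submodule.span ℝ ((fun i => EuclideanSpace.single i (1 : ℝ)) '' s) := by
  rw [← (EuclideanSpace.basisFun ι ℝ).sum_repr w]
  refine Submodule.sum_mem _ fun j _ => ?_
  by_cases hj : j ∈ s
  · rw [EuclideanSpace.basisFun_apply]
    exact Submodule.smul_mem _ _ (Submodule.subset_span (mem_image_of_mem _ hj))
  · simp [hw j hj]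

theorem exists_finset_sumElim_linearIndependent_span_eq {K M α β : Type*} [DivisionRing K]
    [AddCommGroup M] [Module K M] [Fintype α] [Fintype β] (u : α → M) (w : β → M) (s : Set β) :
    ∃ (A : Finset α) (B : Finset β), ↑B ⊆ s ∧
      LinearIndependent K (Sum.elim (fun i : A => u i) (fun i : B => w i)) ∧
      Submodule.span K (u '' ↑A ∪ w '' ↑B) = Submodule.span K (range u ∪ w '' s) := by
  classical
  obtain ⟨b, hbT, -, hspan, hli⟩ := exists_linearIndepOn_extension (v := Sum.elim u w)
    (linearIndepOn_empty K _) (empty_subset (range Sum.inl ∪ Sum.inr '' s))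
  set A : Finset α := Finset.univ.filter (Sum.inl · ∈ b) with hA
  set B : Finset β := Finset.univ.filter (Sum.inr · ∈ b) with hB
  refine ⟨A, B, fun i hi => ?_, ?_, ?_⟩
  · obtain ⟨j, hj⟩ | ⟨j, hj, hji⟩ := hbT (Finset.mem_filter.mp hi).2
    · exact absurd hj Sum.inl_ne_inr
    · exact Sum.inr_injective hji ▸ hj
  · have hinj : Function.Injective (Sum.map (Subtype.val : A → α) (Subtype.val : B → β)) :=
      Sum.map_injective.mpr ⟨Subtype.val_injective, Subtype.val_injective⟩
    have := (linearIndepOn_range_iff hinj (Sum.elim u w)).mp (hli.mono ?_)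
    · rwa [Sum.elim_comp_map] at this
    · rintro _ ⟨⟨i, hi⟩ | ⟨i, hi⟩, rfl⟩ <;> simpa [hA, hB] using hi
  · have himage : Sum.elim u w '' b = u '' ↑A ∪ w '' ↑B := by
      ext x
      constructor
      · rintro ⟨i | i, hi, rfl⟩
        · exact Or.inl ⟨i, by simpa [hA] using hi, rfl⟩
        · exact Or.inr ⟨i, by simpa [hB] using hi, rfl⟩
      · rintro (⟨i, hi, rfl⟩ | ⟨i, hi, rfl⟩)
        · exact ⟨Sum.inl i, by simpa [hA] using hi, rfl⟩
        · exact ⟨Sum.inr i, by simpa [hB] using hi, rfl⟩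
    have hT : Sum.elim u w '' (range Sum.inl ∪ Sum.inr '' s) = range u ∪ w '' s := by
      rw [image_union, ← range_comp, image_image]
      rfl
    rw [← himage, ← hT]
    exact le_antisymm (Submodule.span_mono (image_mono hbT)) (Submodule.span_le.mpr hspan)

section ConicCaratheodory

variable {𝕜 κ M : Type*} [Field 𝕜] [LinearOrder 𝕜] [IsStrictOrderedRing 𝕜] [Fintype κ]

theorem exists_nonneg_sub_smul_support_ssubset {lam α : κ → 𝕜} (hlam : 0 ≤ lam)
    (hα : ∃ i, 0 < α i) (hsupp : ∀ i, lam i = 0 → α i = 0) :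
    ∃ t : 𝕜, 0 ≤ lam - t • α ∧
      Finset.univ.filter (fun i => (lam - t • α) i ≠ 0) ⊂
        Finset.univ.filter (fun i => lam i ≠ 0) := by
  obtain ⟨i₀, hi₀, hmin⟩ := (Finset.univ.filter (fun i => 0 < α i)).exists_min_image
    (fun i => lam i / α i) (by simpa [Finset.Nonempty] using hα)
  have hαi₀ : 0 < α i₀ := (Finset.mem_filter.mp hi₀).2
  -- minimum ratio test: the largest step along `-α` that keeps `lam` nonnegative
  refine ⟨lam i₀ / α i₀, fun i => ?_, ?_⟩
  · rcases lt_or_ge 0 (α i) with hαi | hαi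
    · have := hmin i (by simpa using hαi)
      rw [le_div_iff₀ hαi] at this
      simpa using this
    · have := mul_nonpos_of_nonneg_of_nonpos (div_nonneg (hlam i₀) hαi₀.le) hαi
      simpa using this.trans (hlam i)
  · rw [Finset.ssubset_iff_of_subset]
    · refine ⟨i₀, ?_, ?_⟩
      · simpa using fun h => hαi₀.ne' (hsupp i₀ h)
      · simp [hαi₀.ne']
    · intro i
      simp only [Finset.mem_filter, Finset.mem_univ, true_and]
      intro h hi
      simp [hi, hsupp i hi] at h

theorem exists_nonneg_linearIndepOn_of_sum_smul [AddCommGroup M] [Module 𝕜 M] (v : κ → M)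
    {lam : κ → 𝕜} (hlam : 0 ≤ lam) :
    ∃ lam' : κ → 𝕜, 0 ≤ lam' ∧ (∀ i, lam i = 0 → lam' i = 0) ∧
      ∑ i, lam' i • v i = ∑ i, lam i • v i ∧
      LinearIndepOn 𝕜 v ↑(Finset.univ.filter (fun i => lam' i ≠ 0)) := by
  induction hN : (Finset.univ.filter (fun i => lam i ≠ 0)).card using Nat.strong_induction_on
    generalizing lam with
  | _ N ih =>
  by_cases hli : LinearIndepOn 𝕜 v ↑(Finset.univ.filter (fun i => lam i ≠ 0))
  · exact ⟨lam, hlam, fun _ h => h, rfl, hli⟩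
  obtain ⟨l, hl, hlv, hl0⟩ : ∃ l ∈ Finsupp.supported 𝕜 𝕜 ↑(Finset.univ.filter (fun i => lam i ≠ 0)),
      Finsupp.linearCombination 𝕜 v l = 0 ∧ l ≠ 0 := by
    simpa [linearIndepOn_iff] using hli
  have hlsupp : ∀ i, lam i = 0 → l i = 0 := fun i hi =>
    (Finsupp.mem_supported' 𝕜 l).mp hl i (by simpa using hi)
  have hlsum : ∑ i, l i • v i = 0 := by
    simpa [Finsupp.linearCombination_apply, Finsupp.sum_fintype] using hlv
  obtain ⟨α, hαpos, hαsupp, hαsum⟩ : ∃ α : κ → 𝕜, (∃ i, 0 < α i) ∧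
      (∀ i, lam i = 0 → α i = 0) ∧ ∑ i, α i • v i = 0 := by
    obtain ⟨i, hi⟩ := Finsupp.ne_iff.mp hl0
    rcases (show l i ≠ 0 from hi).lt_or_gt with hneg | hpos
    · exact ⟨-l, ⟨i, by simpa using hneg⟩, fun j hj => by simp [hlsupp j hj], by simp [hlsum]⟩
    · exact ⟨l, ⟨i, hpos⟩, hlsupp, hlsum⟩
  obtain ⟨t, ht0, hsub⟩ := exists_nonneg_sub_smul_support_ssubset hlam hαpos hαsupp
  obtain ⟨lam', hlam', hsupp', hsum', hli'⟩ :=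
    ih _ (hN ▸ Finset.card_lt_card hsub) ht0 rfl
  refine ⟨lam', hlam', fun i hi => hsupp' i (by simp [hi, hαsupp i hi]), ?_, hli'⟩
  simp [hsum', sub_smul, Finset.sum_sub_distrib, mul_smul, ← Finset.smul_sum, hαsum]

theorem exists_nonneg_linearIndependent_sumElim [AddCommGroup M] [Module 𝕜 M] {ι : Type*}
    {b : ι → M} (hb : LinearIndependent 𝕜 b) (v : κ → M) {y : M} {lam : κ → 𝕜}
    (hlam : 0 ≤ lam) (hy : y - ∑ i, lam i • v i ∈ Submodule.span 𝕜 (range b)) :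
    ∃ lam' : κ → 𝕜, 0 ≤ lam' ∧ (∀ i, lam i = 0 → lam' i = 0) ∧
      y - ∑ i, lam' i • v i ∈ Submodule.span 𝕜 (range b) ∧
      LinearIndependent 𝕜
        (Sum.elim b (fun j : ↥(Finset.univ.filter (fun i => lam' i ≠ 0)) => v j)) := by
  set P := Submodule.span 𝕜 (range b)
  obtain ⟨lam', hlam', hsupp, hsum, hli⟩ :=
    exists_nonneg_linearIndepOn_of_sum_smul (P.mkQ ∘ v) hlam
  refine ⟨lam', hlam', hsupp, ?_, ?_⟩
  · rw [← P.ker_mkQ, LinearMap.mem_ker] at hy ⊢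
    simp only [map_sub, map_sum, map_smul] at hy ⊢
    simp only [Function.comp_apply] at hsum
    rwa [hsum]
  · have hbP : LinearIndependent 𝕜
        (fun i => (⟨b i, Submodule.subset_span (mem_range_self i)⟩ : P)) :=
      LinearIndependent.of_comp P.subtype hb
    exact hbP.sumElim_of_quotient _ hli

end ConicCaratheodory

theorem exists_mem_of_tendsto_sum_smul {ι F : Type*} [Fintype ι] [NormedAddCommGroup F]
    [NormedSpace ℝ F] {C : Set (ι → ℝ)} (hC : IsClosed C)
    (hCsmul : ∀ t : ℝ, 0 < t → ∀ ρ ∈ C, t • ρ ∈ C)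
    {V : ι → F} {Vk : ℕ → ι → F} {y : F} {yk : ℕ → F}
    (hV : Tendsto Vk atTop (𝓝 V)) (hy : Tendsto yk atTop (𝓝 y))
    (hrep : ∀ k, ∃ ρ ∈ C, yk k = ∑ i, ρ i • Vk k i)
    (hindep : ∀ ρ ∈ C, ∑ i, ρ i • V i = 0 → ρ = 0) :
    ∃ ρ ∈ C, y = ∑ i, ρ i • V i := by
  choose ρ hρC hρ using hrep
  -- normalising `(ρ k, 1)` to the unit sphere keeps the limit away from `0` even if `ρ k` blows up
  set u : ℕ → (ι → ℝ) × ℝ := fun k => ‖(ρ k, (1 : ℝ))‖⁻¹ • (ρ k, 1) with hu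
  have hne : ∀ k, (ρ k, (1 : ℝ)) ≠ 0 := fun k h => one_ne_zero (congrArg Prod.snd h)
  have hnorm_pos : ∀ k, 0 < ‖(ρ k, (1 : ℝ))‖ := fun k => norm_pos_iff.mpr (hne k)
  have hu_sphere : ∀ k, u k ∈ Metric.sphere 0 1 := fun k => by
    rw [mem_sphere_zero_iff_norm]
    exact norm_smul_inv_norm (hne k)
  obtain ⟨⟨σ, τ⟩, hw, φ, hφ, hlim⟩ := (isCompact_sphere 0 1).tendsto_subseq hu_sphere
  have hσ : Tendsto (fun k => (u (φ k)).1) atTop (𝓝 σ) := (continuous_fst.tendsto _).comp hlim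
  have hτ : Tendsto (fun k => (u (φ k)).2) atTop (𝓝 τ) := (continuous_snd.tendsto _).comp hlim
  have hσC : σ ∈ C := hC.mem_of_tendsto hσ (Eventually.of_forall fun k =>
    hCsmul _ (inv_pos.mpr (hnorm_pos _)) _ (hρC _))
  have hτ0 : 0 ≤ τ := ge_of_tendsto' hτ fun k => by simp [hu]
  have hkey : ∑ i, σ i • V i = τ • y := by
    have hL : Tendsto (fun k => ∑ i, (u (φ k)).1 i • Vk (φ k) i) atTop (𝓝 (∑ i, σ i • V i)) :=
      tendsto_finsetSum _ fun i _ => ((continuous_apply i).tendsto _ |>.comp hσ).smul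
        ((continuous_apply i).tendsto _ |>.comp (hV.comp hφ.tendsto_atTop))
    have hR : Tendsto (fun k => (u (φ k)).2 • yk (φ k)) atTop (𝓝 (τ • y)) :=
      hτ.smul (hy.comp hφ.tendsto_atTop)
    refine tendsto_nhds_unique (hL.congr fun k => ?_) hR
    simp [hu, hρ, Finset.smul_sum, smul_smul]
  have hτne : τ ≠ 0 := by
    rintro rfl
    have : σ = 0 := hindep σ hσC (by simpa using hkey)
    simp [this] at hw
  refine ⟨τ⁻¹ • σ, hCsmul _ (inv_pos.mpr (hτ0.lt_of_ne' hτne)) _ hσC, ?_⟩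
  calc y = τ⁻¹ • (τ • y) := by rw [smul_smul, inv_mul_cancel₀ hτne, one_smul]
    _ = ∑ i, (τ⁻¹ • σ) i • V i := by
      simp only [← hkey, Finset.smul_sum, Pi.smul_apply, smul_smul, smul_eq_mul]

theorem isClosed_setOf_forall_inr_nonneg {α β : Type*} :
    IsClosed {ρ : α ⊕ β → ℝ | ∀ j, 0 ≤ ρ (.inr j)} := by
  simp only [ofPred_forall]
  exact isClosed_iInter fun j => isClosed_le continuous_const (continuous_apply _)

section Constraints

variable {n m q : ℕ} (g : Fin m → E n → ℝ) (h : Fin q → E n → ℝ) (xstar : E n)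

theorem tightFam_eq (x : E n) :
    tightFam h xstar x = range (fun j => gradient (h j) x) ∪
      (fun i => EuclideanSpace.single i (1 : ℝ)) '' {i | xstar i = 0} := by
  ext v
  simp [tightFam, eq_comm]

theorem exists_sub_sum_smul_gradient_mem_span_tightFam {x d : E n}
    (hd : d ∈ Kcone g h xstar x) :
    ∃ lam : Fin m → ℝ, 0 ≤ lam ∧ (∀ i, g i xstar ≠ 0 → lam i = 0) ∧
      d - ∑ i, lam i • gradient (g i) x ∈ Submodule.span ℝ (tightFam h xstar x) := by
  classical
  obtain ⟨mu, lam, hlam, hact, hcoord⟩ := hd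
  refine ⟨lam, hlam, hact, ?_⟩
  rw [show d - ∑ i, lam i • gradient (g i) x = ∑ i, mu i • gradient (h i) x +
      (d - ∑ i, lam i • gradient (g i) x - ∑ i, mu i • gradient (h i) x) by abel,
    tightFam_eq]
  refine Submodule.add_mem _ (Submodule.sum_mem _ fun i _ => Submodule.smul_mem _ _
    (Submodule.subset_span (Or.inl ⟨i, rfl⟩))) ?_
  refine Submodule.span_mono subset_union_right
    (EuclideanSpace.mem_span_single_of_apply_eq_zero fun j hj => ?_)
  simp [hcoord j hj]

end Constraints

section Families

variable {n m q : ℕ} (g : Fin m → E n → ℝ) (h : Fin q → E n → ℝ)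

def tightSubfam (I₁ : Finset (Fin q)) (I₂ : Finset (Fin n)) (x : E n) : ↥I₁ ⊕ ↥I₂ → E n :=
  Sum.elim (fun i => gradient (h i) x) (fun i => EuclideanSpace.single (i : Fin n) (1 : ℝ))

def constrFam (I₁ : Finset (Fin q)) (I₂ : Finset (Fin n)) (J : Finset (Fin m)) (x : E n) :
    (↥I₁ ⊕ ↥I₂) ⊕ ↥J → E n :=
  Sum.elim (tightSubfam h I₁ I₂ x) (fun j => gradient (g j) x)

variable {g h} {I₁ : Finset (Fin q)} {I₂ : Finset (Fin n)} {J : Finset (Fin m)}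

theorem range_tightSubfam (x : E n) :
    range (tightSubfam h I₁ I₂ x) = (fun i => gradient (h i) x) '' ↑I₁ ∪
      (fun i => EuclideanSpace.single i (1 : ℝ)) '' ↑I₂ := by
  rw [tightSubfam, Sum.elim_range]
  congr 1 <;> ext <;> simp

theorem range_tightSubfam_subset {xstar : E n} (hI₂ : ∀ i ∈ I₂, xstar i = 0) (x : E n) :
    range (tightSubfam h I₁ I₂ x) ⊆ tightFam h xstar x := by
  rw [range_tightSubfam, tightFam_eq]
  exact union_subset_union (image_subset_range _ _) (image_mono hI₂)

theorem continuous_tightSubfam (hh : ∀ j, ContDiff ℝ 1 (h j)) :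
    Continuous (tightSubfam h I₁ I₂) :=
  continuous_pi <| by
    rintro (i | i)
    exacts [(hh i).continuous_gradient, continuous_const]

theorem continuous_constrFam (hg : ∀ i, ContDiff ℝ 1 (g i)) (hh : ∀ j, ContDiff ℝ 1 (h j)) :
    Continuous (constrFam g h I₁ I₂ J) :=
  continuous_pi <| by
    rintro (i | j)
    exacts [(continuous_apply i).comp (continuous_tightSubfam hh), (hg j).continuous_gradient]

theorem linearIndependent_constrFam_iff (x : E n) :
    LinearIndependent ℝ (constrFam g h I₁ I₂ J x) ↔
      LinearIndependent ℝ (fun j : (↥I₁ ⊕ ↥I₂ ⊕ ↥J) =>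
        Sum.elim (fun i : ↥I₁ => gradient (h i.1) x)
          (Sum.elim (fun i : ↥I₂ => (EuclideanSpace.single i.1 (1 : ℝ) : E n))
            (fun i : ↥J => gradient (g i.1) x)) j) := by
  rw [← linearIndependent_equiv (Equiv.sumAssoc ↥I₁ ↥I₂ ↥J)]
  congr!
  ext ((_ | _) | _) <;> rfl

theorem sum_smul_constrFam (ρ : (↥I₁ ⊕ ↥I₂) ⊕ ↥J → ℝ) (x : E n) :
    ∑ i, ρ i • constrFam g h I₁ I₂ J x i =
      ∑ i, Subtype.val.extend (fun a => ρ (.inl (.inl a))) 0 i • gradient (h i) x +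
      ∑ i, Subtype.val.extend (fun a => ρ (.inl (.inr a))) 0 i •
        (EuclideanSpace.single i (1 : ℝ) : E n) +
      ∑ i, Subtype.val.extend (fun a => ρ (.inr a)) 0 i • gradient (g i) x := by
  simp only [Finset.sum_extend_val_smul, Fintype.sum_sum_type, constrFam, tightSubfam,
    Sum.elim_inl, Sum.elim_inr]

end Families

section Regularity

variable {n m q : ℕ} {g : Fin m → E n → ℝ} {h : Fin q → E n → ℝ} {xstar : E n}
  {I₁ : Finset (Fin q)} {I₂ : Finset (Fin n)}

theorem eventually_linearIndependent_tightSubfam (hh : ∀ j, ContDiff ℝ 1 (h j))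
    {U : Set (E n)} (hU : U ∈ 𝓝 xstar)
    (hrank : ∀ x ∈ U, tightRank h xstar x = tightRank h xstar xstar)
    (hI₂ : ∀ i ∈ I₂, xstar i = 0) (hli : LinearIndependent ℝ (tightSubfam h I₁ I₂ xstar))
    (hspan : Submodule.span ℝ (range (tightSubfam h I₁ I₂ xstar)) =
      Submodule.span ℝ (tightFam h xstar xstar)) :
    ∀ᶠ x in 𝓝 xstar, x ∈ U ∧ LinearIndependent ℝ (tightSubfam h I₁ I₂ x) ∧
      Submodule.span ℝ (range (tightSubfam h I₁ I₂ x)) = Submodule.span ℝ (tightFam h xstar x) := by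
  filter_upwards [hU, (continuous_tightSubfam hh).continuousAt.eventually hli.eventually]
    with x hxU hlix
  refine ⟨hxU, hlix, hlix.span_range_eq_of_finrank_le (range_tightSubfam_subset hI₂ x) ?_⟩
  rw [← tightRank, hrank x hxU, tightRank, ← hspan, finrank_span_eq_card hli]

theorem exists_constrFam_repr_of_mem_Kcone {x d : E n}
    (hli : LinearIndependent ℝ (tightSubfam h I₁ I₂ x))
    (hspan : Submodule.span ℝ (range (tightSubfam h I₁ I₂ x)) =
      Submodule.span ℝ (tightFam h xstar x))
    (hd : d ∈ Kcone g h xstar x) :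
    ∃ J : Finset (Fin m), (∀ i ∈ J, g i xstar = 0) ∧
      LinearIndependent ℝ (constrFam g h I₁ I₂ J x) ∧
      ∃ ρ : (↥I₁ ⊕ ↥I₂) ⊕ ↥J → ℝ, (∀ j, 0 ≤ ρ (.inr j)) ∧
        d = ∑ i, ρ i • constrFam g h I₁ I₂ J x i := by
  obtain ⟨lam, hlam, hact, hmem⟩ := exists_sub_sum_smul_gradient_mem_span_tightFam g h xstar hd
  rw [← hspan] at hmem
  obtain ⟨lam', hlam', hsupp, hmem', hli'⟩ :=
    exists_nonneg_linearIndependent_sumElim hli _ hlam hmem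
  obtain ⟨c, hc⟩ := (Submodule.mem_span_range_iff_exists_fun ℝ).mp hmem'
  refine ⟨_, fun i hi => ?_, hli', Sum.elim c fun j => lam' j, fun j => hlam' j, ?_⟩
  · by_contra hgi
    exact (Finset.mem_filter.mp hi).2 (hsupp i (hact i hgi))
  · rw [Fintype.sum_sum_type]
    simp only [Sum.elim_inl, Sum.elim_inr, constrFam, hc]
    rw [Finset.sum_coe_sort _ (fun i => lam' i • gradient (g i) x),
      Finset.sum_filter_of_ne fun i _ hi => left_ne_zero_of_smul hi]
    abel

theorem exists_frequently_constrFam_repr {U : Set (E n)}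
    (hbasis : ∀ᶠ x in 𝓝 xstar, x ∈ U ∧ LinearIndependent ℝ (tightSubfam h I₁ I₂ x) ∧
      Submodule.span ℝ (range (tightSubfam h I₁ I₂ x)) = Submodule.span ℝ (tightFam h xstar x))
    {xk dk : ℕ → E n} (hxk : Tendsto xk atTop (𝓝 xstar))
    (hdK : ∀ k, dk k ∈ Kcone g h xstar (xk k)) :
    ∃ J : Finset (Fin m), ∃ᶠ k in atTop, (∀ i ∈ J, g i xstar = 0) ∧
      xk k ∈ U ∧ LinearIndependent ℝ (constrFam g h I₁ I₂ J (xk k)) ∧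
      ∃ ρ : (↥I₁ ⊕ ↥I₂) ⊕ ↥J → ℝ, (∀ j, 0 ≤ ρ (.inr j)) ∧
        dk k = ∑ i, ρ i • constrFam g h I₁ I₂ J (xk k) i := by
  refine frequently_exists.mp (Eventually.frequently ?_)
  filter_upwards [hxk.eventually hbasis] with k ⟨hkU, hlik, hspank⟩
  obtain ⟨J, hJ, hliJ, hrep⟩ := exists_constrFam_repr_of_mem_Kcone hlik hspank (hdK k)
  exact ⟨J, hJ, hkU, hliJ, hrep⟩

theorem exists_multipliers_of_sum_smul_constrFam_eq_zero {J : Finset (Fin m)} {x : E n}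
    {ρ : (↥I₁ ⊕ ↥I₂) ⊕ ↥J → ℝ} (hρ : ∀ j, 0 ≤ ρ (.inr j)) (hρ0 : ρ ≠ 0)
    (hsum : ∑ i, ρ i • constrFam g h I₁ I₂ J x i = 0) :
    ∃ (mu : Fin q → ℝ) (gam : Fin n → ℝ) (lam : Fin m → ℝ),
      (∀ i, 0 ≤ lam i) ∧
      (∀ i, i ∉ I₁ → mu i = 0) ∧ (∀ i, i ∉ I₂ → gam i = 0) ∧
      (∀ i, i ∉ J → lam i = 0) ∧
      ¬(mu = 0 ∧ gam = 0 ∧ lam = 0) ∧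
      (∑ i, mu i • gradient (h i) x) +
        (∑ i, gam i • (EuclideanSpace.single i (1 : ℝ) : E n)) +
        (∑ i, lam i • gradient (g i) x) = 0 := by
  refine ⟨Subtype.val.extend (fun a => ρ (.inl (.inl a))) 0,
    Subtype.val.extend (fun a => ρ (.inl (.inr a))) 0, Subtype.val.extend (fun a => ρ (.inr a)) 0,
    Function.extend_val_nonneg hρ, fun i hi => Function.extend_val_apply' hi,
    fun i hi => Function.extend_val_apply' hi, fun i hi => Function.extend_val_apply' hi, ?_,
    (sum_smul_constrFam ρ x).symm.trans hsum⟩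
  rintro ⟨h₁, h₂, h₃⟩
  refine hρ0 (funext ?_)
  rintro ((a | a) | a)
  · simpa [Function.extend_val_apply a.2] using congrFun h₁ a
  · simpa [Function.extend_val_apply a.2] using congrFun h₂ a
  · simpa [Function.extend_val_apply a.2] using congrFun h₃ a

theorem sum_smul_constrFam_mem_Kcone {J : Finset (Fin m)} (hI₂ : ∀ i ∈ I₂, xstar i = 0)
    (hJ : ∀ i ∈ J, g i xstar = 0) {ρ : (↥I₁ ⊕ ↥I₂) ⊕ ↥J → ℝ} (hρ : ∀ j, 0 ≤ ρ (.inr j))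
    (x : E n) : ∑ i, ρ i • constrFam g h I₁ I₂ J x i ∈ Kcone g h xstar x := by
  refine ⟨Subtype.val.extend (fun a => ρ (.inl (.inl a))) 0,
    Subtype.val.extend (fun a => ρ (.inr a)) 0, Function.extend_val_nonneg hρ,
    fun i hgi => Function.extend_val_apply' fun hi => hgi (hJ i hi), fun j hj => ?_⟩
  have hj₂ : j ∉ I₂ := fun hj₂ => hj (hI₂ j hj₂)
  rw [sum_smul_constrFam]
  simp [Pi.single_apply, Function.extend_val_apply' hj₂]

end Regularity

theorem stmt_12_general {n m q : ℕ}
    (g : Fin m → E n → ℝ) (h : Fin q → E n → ℝ)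
    (hg : ∀ i, ContDiff ℝ 1 (g i)) (hh : ∀ j, ContDiff ℝ 1 (h j))
    (xstar : E n)
    (hrcpld : SPRCPLD g h xstar) :
    ASRegular g h xstar := by
  obtain ⟨U, hU, hrank, hii⟩ := hrcpld
  obtain ⟨I₁, I₂, hI₂, hli, hspan⟩ := exists_finset_sumElim_linearIndependent_span_eq (K := ℝ)
    (fun j => gradient (h j) xstar) (fun i => EuclideanSpace.single i (1 : ℝ)) {i | xstar i = 0}
  rw [← tightFam_eq] at hspan
  have hbasis := eventually_linearIndependent_tightSubfam hh hU hrank hI₂ hli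
    ((range_tightSubfam xstar).symm ▸ hspan)
  intro xk dk d hxk hdk hdK
  obtain ⟨J, hfreq⟩ := exists_frequently_constrFam_repr hbasis hxk hdK
  obtain ⟨φ, hφ, hφP⟩ := extraction_of_frequently_atTop hfreq
  obtain ⟨hJ, hφU, hφli, -⟩ := hφP 0
  obtain ⟨ρ, hρ, rfl⟩ := exists_mem_of_tendsto_sum_smul isClosed_setOf_forall_inr_nonneg
    (fun t ht ρ hρ j => mul_nonneg ht.le (hρ j))
    (((continuous_constrFam hg hh).tendsto xstar).comp (hxk.comp hφ.tendsto_atTop))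
    (hdk.comp hφ.tendsto_atTop) (fun k => (hφP k).2.2.2) fun ρ hρ hsum => by
      by_contra hρ0
      exact hii I₁ I₂ hI₂ hli hspan J hJ
        (exists_multipliers_of_sum_smul_constrFam_eq_zero hρ hρ0 hsum) _ hφU
        ((linearIndependent_constrFam_iff _).mp hφli)
  exact sum_smul_constrFam_mem_Kcone hI₂ hJ hρ xstar

/-- SP-RCPLD implies AS-regularity. -/
theorem stmt_12 {n m q : ℕ} (hn : 1 ≤ n)
    (g : Fin m → E n → ℝ) (h : Fin q → E n → ℝ)
    (hg : ∀ i, ContDiff ℝ 1 (g i)) (hh : ∀ j, ContDiff ℝ 1 (h j))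
    (xstar : E n)
    -- x* ∈ X :
    (hgx : ∀ i, g i xstar ≤ 0) (hhx : ∀ j, h j xstar = 0) (hxnn : ∀ i, 0 ≤ xstar i)
    (hrcpld : SPRCPLD g h xstar) :
    ASRegular g h xstar :=
  stmt_12_general g h hg hh xstar hrcpld
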